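/- Let ν be a probability measure on ℝⁿ with finite second moments, let Q ∈ ℝ^{d×d} and R ∈ ℝ^{m×m} be symmetric positive semidefinite, let K ∈ ℝ^{m×d}, and let P ∈ ℝ^{d×d} be symmetric positive definite such that Q + KᵀRK + ∫ (A(w)+B(w)K)ᵀ P (A(w)+B(w)K) dν(w) ⪯ P. Then for every x₀ ∈ ℝ^d the closed-loop cost series is summable and Σ_{k=0}^∞ tr((Q + KᵀRK) S_k(x₀)) ≤ x₀ᵀ P x₀, where S_k(x₀) are the closed-loop second-moment matrices. -/

import Mathlib

/-!
`V(S) = tr(P S)` is a Lyapunov function along the second moments. By cyclicity of the trace and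
linearity of the integral, `tr(P S_{k+1}) = tr(G S_k)` with `G = ∫ (A(w)+B(w)K)ᵀ P (A(w)+B(w)K) dν`,
so testing the Lyapunov inequality against `S_k ⪰ 0` gives
`tr((Q + KᵀRK) S_k) + tr(P S_{k+1}) ≤ tr(P S_k)`. The stage costs are nonnegative, so the partial
sums stay below `tr(P S_0) = x₀ᵀ P x₀`. All integrals exist because square-integrable noise makes
the entries of `A(w)+B(w)K` square integrable.
-/

open MeasureTheory Matrix

noncomputable section

/-- `A(w) = A₀ + Σᵢ w⁽ⁱ⁾ Aᵢ`. -/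
def Amat {n d : ℕ} (A : Fin (n + 1) → Matrix (Fin d) (Fin d) ℝ) (w : Fin n → ℝ) :
    Matrix (Fin d) (Fin d) ℝ :=
  A 0 + ∑ i : Fin n, w i • A i.succ

/-- `B(w) = B₀ + Σᵢ w⁽ⁱ⁾ Bᵢ`. -/
def Bmat {n d m : ℕ} (B : Fin (n + 1) → Matrix (Fin d) (Fin m) ℝ) (w : Fin n → ℝ) :
    Matrix (Fin d) (Fin m) ℝ :=
  B 0 + ∑ i : Fin n, w i • B i.succ

/-- Second-moment matrices of the autonomous system `x_{k+1} = M(w_k) x_k`. -/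
def Sseq {n d : ℕ} (ν : Measure (Fin n → ℝ))
    (M : (Fin n → ℝ) → Matrix (Fin d) (Fin d) ℝ) (x₀ : Fin d → ℝ) :
    ℕ → Matrix (Fin d) (Fin d) ℝ
  | 0 => Matrix.vecMulVec x₀ x₀
  | k + 1 => Matrix.of fun i j => ∫ w, (M w * Sseq ν M x₀ k * (M w)ᵀ) i j ∂ν

namespace Matrix

variable {ι κ : Type*}

lemma PosSemidef.trace_mul_nonneg [Fintype ι] {C S : Matrix ι ι ℝ} (hC : C.PosSemidef)
    (hS : S.PosSemidef) : 0 ≤ (C * S).trace := by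
  classical
  open scoped MatrixOrder in
  obtain ⟨Y, rfl⟩ := CStarAlgebra.nonneg_iff_eq_star_mul_self.mp hS.nonneg
  rw [star_eq_conjTranspose, ← Matrix.mul_assoc, trace_mul_comm, ← Matrix.mul_assoc]
  exact (hC.mul_mul_conjTranspose_same Y).trace_nonneg

lemma trace_mul_vecMulVec_self [Fintype ι] (P : Matrix ι ι ℝ) (x : ι → ℝ) :
    (P * vecMulVec x x).trace = x ⬝ᵥ P *ᵥ x := by
  rw [mul_vecMulVec, trace_vecMulVec, dotProduct_comm]

variable {α : Type*} [MeasurableSpace α] {μ : Measure α}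

lemma integral_sum_sum_mul_apply [Fintype ι] [Fintype κ] {F : α → Matrix ι κ ℝ}
    (hF : ∀ i j, Integrable (fun w => F w i j) μ) (c : ι → κ → ℝ) :
    ∫ w, ∑ i, ∑ j, c i j * F w i j ∂μ = ∑ i, ∑ j, c i j * ∫ w, F w i j ∂μ := by
  rw [integral_finsetSum _ fun i _ => integrable_finsetSum _ fun j _ => (hF i j).const_mul _]
  refine Finset.sum_congr rfl fun i _ => ?_
  rw [integral_finsetSum _ fun j _ => (hF i j).const_mul _]
  simp only [integral_const_mul]

lemma posSemidef_of_integral_apply [Fintype ι] {F : α → Matrix ι ι ℝ}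
    (hF : ∀ i j, Integrable (fun w => F w i j) μ) (hpsd : ∀ w, (F w).PosSemidef) :
    (of fun i j => ∫ w, F w i j ∂μ).PosSemidef := by
  have quad : ∀ (G : Matrix ι ι ℝ) (x : ι → ℝ),
      star x ⬝ᵥ G *ᵥ x = ∑ i, ∑ j, (x i * x j) * G i j := fun G x => by
    simp only [star_trivial, dotProduct, mulVec, Finset.mul_sum]
    exact Finset.sum_congr rfl fun i _ => Finset.sum_congr rfl fun j _ => by ring
  refine PosSemidef.of_dotProduct_mulVec_nonneg ?_ fun x => ?_
  · ext i j
    simp only [conjTranspose_apply, of_apply, star_trivial]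
    congr 1 with w
    simpa using (hpsd w).isHermitian.apply i j
  · rw [quad]
    simp only [of_apply]
    rw [← integral_sum_sum_mul_apply hF]
    exact integral_nonneg fun w => quad (F w) x ▸ (hpsd w).dotProduct_mulVec_nonneg x

lemma trace_mul_integral_apply [Fintype ι] [Fintype κ] (C : Matrix κ ι ℝ)
    {F : α → Matrix ι κ ℝ} (hF : ∀ i j, Integrable (fun w => F w i j) μ) :
    (C * of fun i j => ∫ w, F w i j ∂μ).trace = ∫ w, (C * F w).trace ∂μ := by
  have trace_eq : ∀ G : Matrix ι κ ℝ, (C * G).trace = ∑ i, ∑ j, C j i * G i j := fun G => by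
    simp only [trace, diag, mul_apply]
    exact Finset.sum_comm
  simp only [trace_eq, of_apply]
  rw [integral_sum_sum_mul_apply hF]

lemma integrable_mul_mul_transpose_apply [Fintype κ] {M : α → Matrix ι κ ℝ}
    (hM : ∀ i j, MemLp (fun w => M w i j) 2 μ) (S : Matrix κ κ ℝ) (i j : ι) :
    Integrable (fun w => (M w * S * (M w)ᵀ) i j) μ := by
  have expand : ∀ w, (M w * S * (M w)ᵀ) i j = ∑ a, ∑ b, S a b * (M w i a * M w j b) :=
    fun w => by
      simp only [mul_apply, transpose_apply, Finset.sum_mul]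
      rw [Finset.sum_comm]
      exact Finset.sum_congr rfl fun b _ => Finset.sum_congr rfl fun a _ => by ring
  simp only [expand]
  exact integrable_finsetSum _ fun a _ => integrable_finsetSum _ fun b _ =>
    ((hM i a).integrable_mul (hM j b)).const_mul (S a b)

lemma integrable_transpose_mul_mul_apply [Fintype ι] {M : α → Matrix ι κ ℝ}
    (hM : ∀ i j, MemLp (fun w => M w i j) 2 μ) (P : Matrix ι ι ℝ) (i j : κ) :
    Integrable (fun w => ((M w)ᵀ * P * M w) i j) μ := by
  simpa using integrable_mul_mul_transpose_apply (M := fun w => (M w)ᵀ) (fun i j => hM j i) P i j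

end Matrix

lemma Amat_add_Bmat_mul {n d m : ℕ} (A : Fin (n + 1) → Matrix (Fin d) (Fin d) ℝ)
    (B : Fin (n + 1) → Matrix (Fin d) (Fin m) ℝ) (K : Matrix (Fin m) (Fin d) ℝ)
    (w : Fin n → ℝ) :
    Amat A w + Bmat B w * K = Amat (fun l => A l + B l * K) w := by
  simp only [Amat, Bmat, Matrix.add_mul, Matrix.sum_mul, Matrix.smul_mul, smul_add,
    Finset.sum_add_distrib]
  abel

lemma memLp_two_Amat_apply {n d : ℕ} {ν : Measure (Fin n → ℝ)} [IsFiniteMeasure ν]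
    (hw : ∀ l, MemLp (fun w => w l) 2 ν) (A : Fin (n + 1) → Matrix (Fin d) (Fin d) ℝ)
    (i j : Fin d) :
    MemLp (fun w => Amat A w i j) 2 ν := by
  simp only [Amat, Matrix.add_apply, Matrix.sum_apply, Matrix.smul_apply, smul_eq_mul]
  have hsum : MemLp (fun w : Fin n → ℝ => ∑ l, w l * A l.succ i j) 2 ν :=
    memLp_finsetSum _ fun l _ => (hw l).mul_const _
  exact (memLp_const (A 0 i j)).add hsum

lemma summable_and_tsum_le_of_add_le {f V : ℕ → ℝ} (hf : ∀ k, 0 ≤ f k) (hV : ∀ k, 0 ≤ V k)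
    (hdecr : ∀ k, f k + V (k + 1) ≤ V k) : Summable f ∧ ∑' k, f k ≤ V 0 := by
  have partial_le : ∀ N, ∑ k ∈ Finset.range N, f k + V N ≤ V 0 := by
    intro N
    induction N with
    | zero => simp
    | succ N ih => rw [Finset.sum_range_succ]; linarith [hdecr N]
  have bound : ∀ N, ∑ k ∈ Finset.range N, f k ≤ V 0 := fun N => by
    linarith [partial_le N, hV N]
  exact ⟨summable_of_sum_range_le hf bound, Real.tsum_le_of_sum_range_le hf bound⟩

section SecondMoments

variable {n d : ℕ} {ν : Measure (Fin n → ℝ)} {M : (Fin n → ℝ) → Matrix (Fin d) (Fin d) ℝ}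

lemma posSemidef_Sseq (hM : ∀ i j, MemLp (fun w => M w i j) 2 ν) (x₀ : Fin d → ℝ) (k : ℕ) :
    (Sseq ν M x₀ k).PosSemidef := by
  induction k with
  | zero => simpa [Sseq] using posSemidef_vecMulVec_self_star x₀
  | succ k ih =>
    refine posSemidef_of_integral_apply (integrable_mul_mul_transpose_apply hM _) fun w => ?_
    simpa only [conjTranspose_eq_transpose_of_trivial] using ih.mul_mul_conjTranspose_same (M w)

lemma trace_mul_Sseq_succ (hM : ∀ i j, MemLp (fun w => M w i j) 2 ν)
    (P : Matrix (Fin d) (Fin d) ℝ) (x₀ : Fin d → ℝ) (k : ℕ) :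
    (P * Sseq ν M x₀ (k + 1)).trace =
      ((of fun i j => ∫ w, ((M w)ᵀ * P * M w) i j ∂ν) * Sseq ν M x₀ k).trace := by
  rw [Sseq, trace_mul_integral_apply _ (integrable_mul_mul_transpose_apply hM _), trace_mul_comm,
    trace_mul_integral_apply _ (integrable_transpose_mul_mul_apply hM _)]
  congr 1 with w
  rw [trace_mul_comm, Matrix.mul_assoc, trace_mul_comm, ← Matrix.mul_assoc, trace_mul_comm]

theorem summable_trace_mul_Sseq_and_tsum_le (hM : ∀ i j, MemLp (fun w => M w i j) 2 ν)
    {C P : Matrix (Fin d) (Fin d) ℝ} (hC : C.PosSemidef) (hP : P.PosSemidef)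
    (hLyap : (P - (C + of fun i j => ∫ w, ((M w)ᵀ * P * M w) i j ∂ν)).PosSemidef)
    (x₀ : Fin d → ℝ) :
    Summable (fun k => (C * Sseq ν M x₀ k).trace) ∧
      ∑' k, (C * Sseq ν M x₀ k).trace ≤ x₀ ⬝ᵥ P *ᵥ x₀ := by
  rw [← trace_mul_vecMulVec_self]
  refine summable_and_tsum_le_of_add_le (fun k => hC.trace_mul_nonneg (posSemidef_Sseq hM x₀ k))
    (fun k => hP.trace_mul_nonneg (posSemidef_Sseq hM x₀ k)) fun k => ?_
  have lyap_tested := hLyap.trace_mul_nonneg (posSemidef_Sseq hM x₀ k)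
  rw [trace_mul_Sseq_succ hM]
  simp only [Matrix.sub_mul, Matrix.add_mul, trace_sub, trace_add] at lyap_tested
  linarith

end SecondMoments

theorem stmt15_general {n d m : ℕ}
    (A : Fin (n + 1) → Matrix (Fin d) (Fin d) ℝ)
    (B : Fin (n + 1) → Matrix (Fin d) (Fin m) ℝ)
    (ν : Measure (Fin n → ℝ)) [IsProbabilityMeasure ν]
    (hint2 : ∀ i j, Integrable (fun w : Fin n → ℝ => w i * w j) ν)
    (Q : Matrix (Fin d) (Fin d) ℝ) (hQ : Q.PosSemidef)
    (R : Matrix (Fin m) (Fin m) ℝ) (hR : R.PosSemidef)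
    (K : Matrix (Fin m) (Fin d) ℝ)
    (P : Matrix (Fin d) (Fin d) ℝ) (hP : P.PosDef)
    (hLyap : (P - (Q + Kᵀ * R * K + Matrix.of fun i j =>
      ∫ w, ((Amat A w + Bmat B w * K)ᵀ * P * (Amat A w + Bmat B w * K)) i j
        ∂ν)).PosSemidef)
    (x₀ : Fin d → ℝ) :
    Summable (fun k => ((Q + Kᵀ * R * K) *
        Sseq ν (fun w => Amat A w + Bmat B w * K) x₀ k).trace) ∧
      (∑' k, ((Q + Kᵀ * R * K) *
        Sseq ν (fun w => Amat A w + Bmat B w * K) x₀ k).trace) ≤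
        x₀ ⬝ᵥ P *ᵥ x₀ := by
  have hw : ∀ l, MemLp (fun w : Fin n → ℝ => w l) 2 ν := fun l =>
    (memLp_two_iff_integrable_sq (measurable_pi_apply l).aestronglyMeasurable).2
      (by simpa only [sq] using hint2 l l)
  have hC : (Q + Kᵀ * R * K).PosSemidef := hQ.add <| by
    simpa only [conjTranspose_eq_transpose_of_trivial] using hR.conjTranspose_mul_mul_same K
  simp only [Amat_add_Bmat_mul] at hLyap ⊢
  exact summable_trace_mul_Sseq_and_tsum_le (memLp_two_Amat_apply hw _) hC hP.posSemidef hLyap x₀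

/-- If `P ≻ 0` satisfies the Lyapunov-type inequality
`Q + KᵀRK + ∫ (A(w)+B(w)K)ᵀ P (A(w)+B(w)K) dν ⪯ P`, then the closed-loop cost series is
summable and `Σ_k tr((Q + KᵀRK) S_k(x₀)) ≤ x₀ᵀPx₀`. -/
theorem stmt15 {n d m : ℕ}
    (A : Fin (n + 1) → Matrix (Fin d) (Fin d) ℝ)
    (B : Fin (n + 1) → Matrix (Fin d) (Fin m) ℝ)
    (ν : Measure (Fin n → ℝ)) [IsProbabilityMeasure ν]
    (hint1 : ∀ i, Integrable (fun w : Fin n → ℝ => w i) ν)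
    (hint2 : ∀ i j, Integrable (fun w : Fin n → ℝ => w i * w j) ν)
    (Q : Matrix (Fin d) (Fin d) ℝ) (hQ : Q.PosSemidef)
    (R : Matrix (Fin m) (Fin m) ℝ) (hR : R.PosSemidef)
    (K : Matrix (Fin m) (Fin d) ℝ)
    (P : Matrix (Fin d) (Fin d) ℝ) (hP : P.PosDef)
    (hLyap : (P - (Q + Kᵀ * R * K + Matrix.of fun i j =>
      ∫ w, ((Amat A w + Bmat B w * K)ᵀ * P * (Amat A w + Bmat B w * K)) i j
        ∂ν)).PosSemidef)
    (x₀ : Fin d → ℝ) :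
    Summable (fun k => ((Q + Kᵀ * R * K) *
        Sseq ν (fun w => Amat A w + Bmat B w * K) x₀ k).trace) ∧
      (∑' k, ((Q + Kᵀ * R * K) *
        Sseq ν (fun w => Amat A w + Bmat B w * K) x₀ k).trace) ≤
        x₀ ⬝ᵥ P *ᵥ x₀ :=
  stmt15_general A B ν hint2 Q hQ R hR K P hP hLyap x₀

end
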